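/- Let (Ω,ℱ,ℙ,(θ_t)_{t∈ℝ}) be a metric dynamical system and let M₁ ∈ ℬ([0,∞)) ⊗ ℱ be a set of full λ ⊗ ℙ measure (λ Lebesgue measure on [0,∞)). Define Ω̃ := {ω ∈ Ω : (s+r, θ_{−r}ω) ∈ M₁ for λ⊗λ-almost all (s,r) ∈ ℝ² with s+r ≥ 0}. Then Ω̃ ∈ ℱ, ℙ(Ω̃) = 1, and Ω̃ is invariant under θ_u for every u ∈ ℝ. -/

import Mathlib

open Set MeasureTheory

/-!
Pull `M₁` back along `((s, r), ω) ↦ (s + r, θ₋ᵣ ω)`. Since `ℙ` is `θ`-invariant and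
preimages of `λ`-null sets under `(s, r) ↦ s + r` are `λ ⊗ λ`-null, almost every `(s, r)` has a
`ℙ`-null bad fibre; Fubini on the measurable pulled-back set turns this into "for `ℙ`-a.e. `ω`,
almost every `(s, r)` is good", i.e. `ℙ(Ω̃) = 1`. Invariance holds because replacing `ω` by `θᵤ ω`
amounts to translating `(s, r)` by `(u, -u)`, which preserves both `s + r` and `λ ⊗ λ`.
-/

theorem MeasurableSet.setOf_ae_mem {α β : Type*} [MeasurableSpace α]
    [MeasurableSpace β] {μ : Measure α} [SFinite μ] {s : Set (α × β)} (hs : MeasurableSet s) :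
    MeasurableSet {b | ∀ᵐ a ∂μ, (a, b) ∈ s} := by
  have h : {b | ∀ᵐ a ∂μ, (a, b) ∈ s} = (fun b => μ ((fun a => (a, b)) ⁻¹' sᶜ)) ⁻¹' {0} := rfl
  rw [h]
  exact measurable_measure_prodMk_right hs.compl (measurableSet_singleton 0)

theorem MeasureTheory.ae_imp_ae_mem_of_restrict_prod_compl_null {α β : Type*}
    [MeasurableSpace α] [MeasurableSpace β] {μ : Measure α} {ν : Measure β} [SFinite ν]
    {s : Set α} (hs : MeasurableSet s) {M : Set (α × β)} (hM : ((μ.restrict s).prod ν) Mᶜ = 0) :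
    ∀ᵐ a ∂μ, a ∈ s → ∀ᵐ b ∂ν, (a, b) ∈ M :=
  (ae_restrict_iff' hs).1 (Measure.ae_ae_of_ae_prod (mem_ae_iff.2 hM))

theorem MeasureTheory.ae_comp_add_right_iff {G : Type*} [AddGroup G] [MeasurableSpace G]
    [MeasurableAdd G] (μ : Measure G) [μ.IsAddRightInvariant] (c : G) {q : G → Prop} :
    (∀ᵐ x ∂μ, q (x + c)) ↔ ∀ᵐ x ∂μ, q x := by
  refine ⟨fun h => ?_, (measurePreserving_add_right μ c).quasiMeasurePreserving.ae⟩
  simpa using (measurePreserving_add_right μ (-c)).quasiMeasurePreserving.ae h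

section ShiftPreimage

variable {Ω : Type*} {θ : ℝ → Ω → Ω} {M₁ : Set (ℝ × Ω)}

variable (θ M₁) in
def shiftPreimage : Set ((ℝ × ℝ) × Ω) :=
  {q | 0 ≤ q.1.1 + q.1.2 → (q.1.1 + q.1.2, θ (-q.1.2) q.2) ∈ M₁}

theorem measurableSet_shiftPreimage [MeasurableSpace Ω]
    (hθmeas : Measurable fun p : ℝ × Ω => θ p.1 p.2) (hM₁ : MeasurableSet M₁) :
    MeasurableSet (shiftPreimage θ M₁) := by
  have hsum : Measurable fun q : (ℝ × ℝ) × Ω => q.1.1 + q.1.2 :=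
    measurable_fst.fst.add measurable_fst.snd
  have hpull : Measurable fun q : (ℝ × ℝ) × Ω => (q.1.1 + q.1.2, θ (-q.1.2) q.2) :=
    hsum.prodMk (hθmeas.comp (measurable_fst.snd.neg.prodMk measurable_snd))
  exact (measurableSet_le measurable_const hsum).imp (hpull hM₁)

theorem ae_ae_mem_shiftPreimage [MeasurableSpace Ω] (ℙ : Measure Ω)
    (hθqmp : ∀ t : ℝ, Measure.QuasiMeasurePreserving (θ t) ℙ ℙ)
    (hM₁ : ∀ᵐ t, 0 ≤ t → ∀ᵐ ω ∂ℙ, (t, ω) ∈ M₁) :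
    ∀ᵐ p : ℝ × ℝ ∂volume.prod volume, ∀ᵐ ω ∂ℙ, (p, ω) ∈ shiftPreimage θ M₁ := by
  filter_upwards [(quasiMeasurePreserving_add volume volume).ae hM₁] with p hp
  exact Filter.eventually_imp_distrib_left.2 fun h => (hθqmp (-p.2)).ae (hp h)

theorem mk_add_mem_shiftPreimage_iff (hθadd : ∀ s t : ℝ, θ (t + s) = θ t ∘ θ s)
    (u : ℝ) (p : ℝ × ℝ) (ω : Ω) :
    (p + (u, -u), ω) ∈ shiftPreimage θ M₁ ↔ (p, θ u ω) ∈ shiftPreimage θ M₁ := by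
  have hsum : p.1 + u + (p.2 + -u) = p.1 + p.2 := by ring
  have hflow : θ (-(p.2 + -u)) ω = θ (-p.2) (θ u ω) := by
    rw [neg_add, neg_neg, hθadd]
    rfl
  simp only [shiftPreimage, mem_ofPred_eq, Prod.fst_add, Prod.snd_add, hsum, hflow]

theorem preimage_setOf_ae_mem_shiftPreimage (hθadd : ∀ s t : ℝ, θ (t + s) = θ t ∘ θ s)
    (u : ℝ) :
    θ u ⁻¹' {ω | ∀ᵐ p : ℝ × ℝ ∂volume.prod volume, (p, ω) ∈ shiftPreimage θ M₁} =
      {ω | ∀ᵐ p : ℝ × ℝ ∂volume.prod volume, (p, ω) ∈ shiftPreimage θ M₁} := by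
  ext ω
  calc (∀ᵐ p : ℝ × ℝ ∂volume.prod volume, (p, θ u ω) ∈ shiftPreimage θ M₁)
      ↔ ∀ᵐ p : ℝ × ℝ ∂volume.prod volume, (p + (u, -u), ω) ∈ shiftPreimage θ M₁ := by
        simp only [mk_add_mem_shiftPreimage_iff hθadd]
    _ ↔ ∀ᵐ p : ℝ × ℝ ∂volume.prod volume, (p, ω) ∈ shiftPreimage θ M₁ :=
        ae_comp_add_right_iff (q := fun p => (p, ω) ∈ shiftPreimage θ M₁) _ _

end ShiftPreimage

theorem tildeOmega_full_and_invariant_general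
    {Ω : Type*} [MeasurableSpace Ω] (ℙ : Measure Ω) [IsProbabilityMeasure ℙ]
    (θ : ℝ → Ω → Ω) (hθadd : ∀ s t : ℝ, θ (t + s) = θ t ∘ θ s)
    (hθmeas : Measurable fun p : ℝ × Ω => θ p.1 p.2)
    (hθmp : ∀ t : ℝ, MeasurePreserving (θ t) ℙ ℙ)
    (M₁ : Set (ℝ × Ω)) (hM₁ : MeasurableSet M₁)
    (hfull : ((volume.restrict (Ici (0 : ℝ))).prod ℙ) M₁ᶜ = 0)
    (Ωt : Set Ω)
    (hΩt : Ωt = {ω : Ω |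
      ∀ᵐ p : ℝ × ℝ ∂(volume.prod volume), 0 ≤ p.1 + p.2 →
        (p.1 + p.2, θ (-p.2) ω) ∈ M₁}) :
    MeasurableSet Ωt ∧ ℙ Ωt = 1 ∧ ∀ u : ℝ, θ u ⁻¹' Ωt = Ωt := by
  change Ωt = {ω | ∀ᵐ p : ℝ × ℝ ∂volume.prod volume, (p, ω) ∈ shiftPreimage θ M₁} at hΩt
  subst hΩt
  have hS := measurableSet_shiftPreimage hθmeas hM₁
  have hmeas : MeasurableSet {ω | ∀ᵐ p : ℝ × ℝ ∂volume.prod volume,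
      (p, ω) ∈ shiftPreimage θ M₁} := hS.setOf_ae_mem
  have hfibres : ∀ᵐ t, 0 ≤ t → ∀ᵐ ω ∂ℙ, (t, ω) ∈ M₁ :=
    ae_imp_ae_mem_of_restrict_prod_compl_null measurableSet_Ici hfull
  have hae : ∀ᵐ ω ∂ℙ, ∀ᵐ p : ℝ × ℝ ∂volume.prod volume, (p, ω) ∈ shiftPreimage θ M₁ :=
    (Measure.ae_ae_comm (p := fun p ω => (p, ω) ∈ shiftPreimage θ M₁) hS).1
      (ae_ae_mem_shiftPreimage ℙ (fun t => (hθmp t).quasiMeasurePreserving) hfibres)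
  exact ⟨hmeas, (ae_iff_prob_eq_one (measurableSet_setOfPred.1 hmeas)).1 hae,
    preimage_setOf_ae_mem_shiftPreimage hθadd⟩

/-- For an MDS and a product-measurable set M₁ ⊆ [0,∞) × Ω of full
λ ⊗ ℙ measure, the set Ω̃ of all ω such that (s+r, θ_{-r}ω) ∈ M₁ for λ⊗λ-a.a.
(s,r) with s + r ≥ 0 is measurable, has full ℙ-measure, and is θ-invariant. -/
theorem tildeOmega_full_and_invariant
    {Ω : Type*} [MeasurableSpace Ω] (ℙ : Measure Ω) [IsProbabilityMeasure ℙ]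
    (θ : ℝ → Ω → Ω) (hθ0 : θ 0 = id) (hθadd : ∀ s t : ℝ, θ (t + s) = θ t ∘ θ s)
    (hθmeas : Measurable fun p : ℝ × Ω => θ p.1 p.2)
    (hθmp : ∀ t : ℝ, MeasurePreserving (θ t) ℙ ℙ)
    (M₁ : Set (ℝ × Ω)) (hM₁ : MeasurableSet M₁)
    (hfull : ((volume.restrict (Ici (0 : ℝ))).prod ℙ) M₁ᶜ = 0)
    (Ωt : Set Ω)
    (hΩt : Ωt = {ω : Ω |
      ∀ᵐ p : ℝ × ℝ ∂(volume.prod volume), 0 ≤ p.1 + p.2 →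
        (p.1 + p.2, θ (-p.2) ω) ∈ M₁}) :
    MeasurableSet Ωt ∧ ℙ Ωt = 1 ∧ ∀ u : ℝ, θ u ⁻¹' Ωt = Ωt :=
  tildeOmega_full_and_invariant_general ℙ θ hθadd hθmeas hθmp M₁ hM₁ hfull Ωt hΩt
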